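/- Let s ∈ GF(q^m)^{n-k} and suppose that E and E' are two GF(q)-subspaces of GF(q^m), each of dimension r, that both witness the T-decodability of s (i.e., each satisfies conditions (i), (ii) and (iii)). Then E = E'. In other words, a T-decodable syndrome entirely determines the associated subspace E. -/
import Mathlib


/-- A subspace `E` of dimension `r` witnesses the `T`-decodability of `s ∈ K^ν`
(where `K` plays the role of `GF(q^m)` over `Fq = GF(q)`) if:
(i) `dim⟨Fsp·E⟩ = d·r`;
(ii) `dim(F₁⁻¹⟨Fsp·E⟩ ∩ F₂⁻¹⟨Fsp·E⟩) = r`;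
(iii) all coordinates of `s` belong to `⟨Fsp·E⟩` and, together with the elements of
`⟨Fsp·T⟩`, they generate `⟨Fsp·E⟩`. -/
def WitnessesTDecodability {Fq K : Type} [Field Fq] [Field K] [Algebra Fq K]
    (Fsp T : Submodule Fq K) (F₁ F₂ : K) (d r : ℕ) {ν : ℕ} (s : Fin ν → K)
    (E : Submodule Fq K) : Prop :=
  Module.finrank Fq ↥E = r ∧
  Module.finrank Fq ↥(Fsp * E) = d * r ∧
  Module.finrank Fq ↥((Fsp * E).map (LinearMap.mulLeft Fq F₁⁻¹) ⊓
    (Fsp * E).map (LinearMap.mulLeft Fq F₂⁻¹)) = r ∧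
  (∀ i, s i ∈ Fsp * E) ∧
  (Fsp * T) ⊔ Submodule.span Fq (Set.range s) = Fsp * E

/-- A `T`-decodable syndrome entirely determines the associated subspace `E`:
if `E` and `E'` both witness the `T`-decodability of `s`, then `E = E'`. -/
theorem TDecodable_witness_unique
    (q m n k d t r : ℕ) (hm : 0 < m) (hnk : k < n)
    (Fq K : Type) [Field Fq] [Fintype Fq] [Field K] [Algebra Fq K]
    (hq : Fintype.card Fq = q) (hK : Module.finrank Fq K = m)
    (Fsp T : Submodule Fq K)
    (hF : Module.finrank Fq ↥Fsp = d) (hT : Module.finrank Fq ↥T = t)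
    (F₁ F₂ : K) (hF₁ : F₁ ∈ Fsp) (hF₂ : F₂ ∈ Fsp)
    (hind : LinearIndependent Fq ![F₁, F₂])
    (htr : t ≤ r) (hrm : r ≤ m)
    (s : Fin (n - k) → K) (E E' : Submodule Fq K)
    (hE : WitnessesTDecodability Fsp T F₁ F₂ d r s E)
    (hE' : WitnessesTDecodability Fsp T F₁ F₂ d r s E') :
    E = E' := by
  have hfin : FiniteDimensional Fq K := by
    apply FiniteDimensional.of_finrank_pos; omega
  obtain ⟨hEr, _, hEint, hEs, hEgen⟩ := hE
  obtain ⟨hE'r, _, hE'int, hE's, hE'gen⟩ := hE'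
  have hPP : Fsp * E = Fsp * E' := by rw [← hEgen, ← hE'gen]
  have hF₁0 : F₁ ≠ 0 := by
    intro h
    exact hind.ne_zero 0 (by simpa using h)
  have hF₂0 : F₂ ≠ 0 := by
    intro h
    exact hind.ne_zero 1 (by simpa using h)
  have key : ∀ W : Submodule Fq K, Module.finrank Fq ↥W = r →
      Module.finrank Fq ↥((Fsp * W).map (LinearMap.mulLeft Fq F₁⁻¹) ⊓
        (Fsp * W).map (LinearMap.mulLeft Fq F₂⁻¹)) = r →
      W = (Fsp * W).map (LinearMap.mulLeft Fq F₁⁻¹) ⊓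
        (Fsp * W).map (LinearMap.mulLeft Fq F₂⁻¹) := by
    intro W hWr hWint
    apply Submodule.eq_of_le_of_finrank_eq
    · intro x hx
      constructor
      · exact ⟨F₁ * x, Submodule.mul_mem_mul hF₁ hx, by
          simp [LinearMap.mulLeft_apply, ← mul_assoc, inv_mul_cancel₀ hF₁0]⟩
      · exact ⟨F₂ * x, Submodule.mul_mem_mul hF₂ hx, by
          simp [LinearMap.mulLeft_apply, ← mul_assoc, inv_mul_cancel₀ hF₂0]⟩
    · rw [hWr, hWint]
  calc E = (Fsp * E).map (LinearMap.mulLeft Fq F₁⁻¹) ⊓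
        (Fsp * E).map (LinearMap.mulLeft Fq F₂⁻¹) := key E hEr hEint
    _ = (Fsp * E').map (LinearMap.mulLeft Fq F₁⁻¹) ⊓
        (Fsp * E').map (LinearMap.mulLeft Fq F₂⁻¹) := by rw [hPP]
    _ = E' := (key E' hE'r hE'int).symm
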